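/- Let H be a graph whose vertices of degree at least 3 induce a subgraph with at most one edge, and which contains a roof triangle; let a and b be the two attachment vertices (so all roof triangles of H have attachment vertices a, b). Let X be the set of vertices of H that belong to some roof triangle, let H' := H[X] (a book graph with common edge ab), and let R := H − (X ∖ {a, b}). For a graph G₀ and an integer k ≥ 0, construct the graph G as follows: start with G₀; for every edge uv of G₀ and every i ∈ {1, …, k+1}, add a fresh disjoint copy Rⁱ_{uv} of R − {a, b} with all edges inside the copy exactly as in R − {a, b}; in each copy, join the copy of every R-neighbor of a to u and the copy of every R-neighbor of b to v; add no other edges. Then the following are equivalent: (i) there exists F ⊆ E(G₀) with |F| ≤ k such that G₀ − F is H'-free; (ii) some graph obtained from G by at most k edge subdivisions is H-free. -/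

import Mathlib

open SimpleGraph

/-- The number of neighbors (degree) of a vertex, via `Set.ncard`. -/
noncomputable def ndeg {V : Type*} (G : SimpleGraph V) (v : V) : ℕ := (G.neighborSet v).ncard

/-- The graph obtained from `G` by subdividing the edge `uv`. -/
def subdivide {V : Type*} (G : SimpleGraph V) (u v : V) : SimpleGraph (Option V) :=
  SimpleGraph.fromRel (fun x y =>
    (∃ a b : V, x = some a ∧ y = some b ∧ G.Adj a b ∧ ¬(a = u ∧ b = v) ∧ ¬(a = v ∧ b = u)) ∨
    (x = none ∧ (y = some u ∨ y = some v)))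

/-- `G` is `H`-free if it contains no induced subgraph isomorphic to `H`. -/
def HFree {α β : Type*} (H : SimpleGraph α) (G : SimpleGraph β) : Prop :=
  IsEmpty (H ↪g G)

/-- Bundled graphs. -/
abbrev GraphB : Type 1 := Σ V : Type, SimpleGraph V

/-- One edge-subdivision step between (bundled) graphs, up to isomorphism. -/
def SubdivStep : GraphB → GraphB → Prop := fun p q =>
  ∃ u v : p.1, p.2.Adj u v ∧ Nonempty (q.2 ≃g subdivide p.2 u v)

/-- `SubdivSteps n p q`: `q` is obtained from `p` by exactly `n` edge subdivisions. -/
def SubdivSteps : ℕ → GraphB → GraphB → Prop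
  | 0 => fun p q => p = q
  | n + 1 => fun p r => ∃ q : GraphB, SubdivStep p q ∧ SubdivSteps n q r

/-- Three pairwise adjacent vertices. -/
def IsTriangle {α : Type*} (H : SimpleGraph α) (x y z : α) : Prop :=
  H.Adj x y ∧ H.Adj y z ∧ H.Adj x z

/-- A roof triangle: a triangle containing exactly two vertices of degree at least 3. -/
def IsRoofTriangle {α : Type*} (H : SimpleGraph α) (x y z : α) : Prop :=
  IsTriangle H x y z ∧ (({x, y, z} : Set α) ∩ {w | 3 ≤ ndeg H w}).ncard = 2

/-- The set `X` of vertices of `H` that belong to some roof triangle. -/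
def roofVerts {α : Type*} (H : SimpleGraph α) : Set α :=
  {w | ∃ y z : α, IsRoofTriangle H w y z}

/-- The graph `G` built from `G₀` in the roof-triangle reduction.  `D` is an orientation of
the edges of `G₀`.  For each (oriented) edge `(u, v)` of `G₀` and each `i ∈ Fin (k+1)` we
attach a fresh copy of `R − {a, b}` (whose vertex set is the complement of
`roofVerts H`, with internal edges exactly as in `H`): the copy of each `R`-neighbor of `a`
is joined to `u`, and the copy of each `R`-neighbor of `b` is joined to `v`.
No other edges are added. -/
def attachRoof {α V₀ : Type} (H : SimpleGraph α) (a b : α)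
    (G₀ : SimpleGraph V₀) (D : Set (V₀ × V₀)) (k : ℕ) :
    SimpleGraph (V₀ ⊕ (↥D × Fin (k + 1) × ↥(roofVerts H)ᶜ)) :=
  SimpleGraph.fromRel (fun p q =>
    (∃ u v : V₀, p = Sum.inl u ∧ q = Sum.inl v ∧ G₀.Adj u v) ∨
    (∃ (d : ↥D) (i : Fin (k + 1)) (r r' : ↥(roofVerts H)ᶜ),
        p = Sum.inr (d, i, r) ∧ q = Sum.inr (d, i, r') ∧ H.Adj ↑r ↑r') ∨
    (∃ (d : ↥D) (i : Fin (k + 1)) (r : ↥(roofVerts H)ᶜ) (w : V₀),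
        p = Sum.inr (d, i, r) ∧ q = Sum.inl w ∧
        ((w = (↑d : V₀ × V₀).1 ∧ H.Adj ↑r a) ∨ (w = (↑d : V₀ × V₀).2 ∧ H.Adj ↑r b))))

/-!
Forward direction: subdivide exactly the edges of `F`. A vertex of `H` of degree at least 3 cannot
sit on a subdivision vertex (degree 2), nor on a gadget vertex: a gadget vertex copies a vertex
`r ∉ X` of at least the same degree, and such an `r` has no neighbour of degree at least 3 because
`ab` is the only edge between such vertices. Hence an induced copy of `H` puts `a` and `b` on base
vertices, and then every page as well, since no gadget or subdivision vertex sees both ends of a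
surviving edge of `G₀`. This yields a copy of `H'` in `G₀ - F`.

Backward direction: `n` subdivisions leave an induced copy of `G - T` for a set `T` of at most `n`
edges. A copy of `H'` in `G₀ - (T ∩ E(G₀))`, oriented along `D` with the automorphism of the book
graph swapping `a` and `b`, extends to a copy of `H` in `G - T` through one of the `k + 1` gadgets
on its edge `ab` that `T` does not touch.
-/

open Sum

lemma Sym2.map_eq_mk_iff_of_injective {X Y : Type*} {f : X → Y} (hf : f.Injective) {z : Sym2 X}
    {x y : X} : z.map f = s(f x, f y) ↔ z = s(x, y) := by
  rw [← Sym2.map_mk]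
  exact (Sym2.map.injective hf).eq_iff

lemma Sym2.map_ne_mk_of_notMem_range {X Y : Type*} {f : X → Y} {z : Sym2 X} {p q : Y}
    (hp : p ∉ Set.range f) : z.map f ≠ s(p, q) ∧ z.map f ≠ s(q, p) := by
  have : p ∉ z.map f := fun h => hp (by obtain ⟨x, -, rfl⟩ := Sym2.mem_map.1 h; exact ⟨x, rfl⟩)
  constructor <;> rintro h <;> simp [h] at this

@[simp]
lemma Sym2.inl_mem_map_inl_iff {X Y : Type*} {x : X} {z : Sym2 X} :
    (inl x : X ⊕ Y) ∈ z.map inl ↔ x ∈ z := by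
  simp [Sym2.mem_map]

section Subdivision

variable {W : Type*} (G : SimpleGraph W) (u v : W)

@[simp]
lemma subdivide_adj_some_some {x y : W} :
    (subdivide G u v).Adj (some x) (some y) ↔ G.Adj x y ∧ s(x, y) ≠ s(u, v) := by
  simp only [subdivide, fromRel_adj]
  have := G.adj_comm x y
  aesop

@[simp]
lemma subdivide_adj_none_some {y : W} :
    (subdivide G u v).Adj none (some y) ↔ y = u ∨ y = v := by
  simp only [subdivide, fromRel_adj]
  aesop

@[simp]
lemma subdivide_adj_some_none {y : W} :
    (subdivide G u v).Adj (some y) none ↔ y = u ∨ y = v := by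
  rw [adj_comm, subdivide_adj_none_some]

end Subdivision

/-- When the `e i` are distinct edges of `G`, this is `G` with all of them subdivided. -/
def subdivideFamily {W ι : Type*} (G : SimpleGraph W) (e : ι → Sym2 W) : SimpleGraph (W ⊕ ι) where
  Adj
    | inl x, inl y => G.Adj x y ∧ s(x, y) ∉ Set.range e
    | inl x, inr i => x ∈ e i
    | inr i, inl x => x ∈ e i
    | inr _, inr _ => False
  symm := ⟨by
    rintro (x | i) (y | j) h
    exacts [⟨h.1.symm, Sym2.eq_swap (a := x) ▸ h.2⟩, h, h, h]⟩
  loopless := ⟨by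
    rintro (x | i) h
    exacts [h.1.ne rfl, h]⟩

section SubdivideFamily

variable {W ι : Type*} (G : SimpleGraph W) (e : ι → Sym2 W)

@[simp]
lemma subdivideFamily_adj_inl_inl {x y : W} :
    (subdivideFamily G e).Adj (inl x) (inl y) ↔ G.Adj x y ∧ s(x, y) ∉ Set.range e :=
  Iff.rfl

@[simp]
lemma subdivideFamily_adj_inl_inr {x : W} {i : ι} :
    (subdivideFamily G e).Adj (inl x) (inr i) ↔ x ∈ e i :=
  Iff.rfl

@[simp]
lemma subdivideFamily_adj_inr_inl {x : W} {i : ι} :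
    (subdivideFamily G e).Adj (inr i) (inl x) ↔ x ∈ e i :=
  Iff.rfl

@[simp]
lemma subdivideFamily_not_adj_inr_inr {i j : ι} : ¬ (subdivideFamily G e).Adj (inr i) (inr j) :=
  id

lemma ndeg_subdivideFamily_inr_le_two (i : ι) : ndeg (subdivideFamily G e) (inr i) ≤ 2 := by
  obtain ⟨x, y, hxy⟩ : ∃ x y, e i = s(x, y) := ⟨_, _, (Quot.out_eq (e i)).symm⟩
  have hsub : (subdivideFamily G e).neighborSet (inr i) ⊆ {inl x, inl y} := by
    rintro (z | j) h
    · simpa [hxy] using h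
    · simp at h
  exact (Set.ncard_le_ncard hsub).trans (Set.ncard_insert_le _ _ |>.trans (by simp))

lemma ndeg_subdivideFamily_inl {x : W} (hx : ∀ i, x ∉ e i) :
    ndeg (subdivideFamily G e) (inl x) = ndeg G x := by
  have : (subdivideFamily G e).neighborSet (inl x) = inl '' G.neighborSet x := by
    ext (y | i)
    · simp only [mem_neighborSet, subdivideFamily_adj_inl_inl, Set.mem_image, inl.injEq,
        exists_eq_right, and_iff_left_iff_imp]
      rintro - ⟨i, hi⟩
      exact hx i (hi ▸ Sym2.mem_mk_left x y)
    · simp [hx i]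
  rw [ndeg, ndeg, this, Set.ncard_image_of_injective _ inl_injective]

def subdivideFamilyIsEmptyIso [IsEmpty ι] : subdivideFamily G e ≃g G where
  toEquiv := Equiv.sumEmpty W ι
  map_rel_iff' := by
    rintro (x | i) (y | j)
    · simp
    all_goals exact isEmptyElim ‹ι›

end SubdivideFamily

def subdivideFamilySuccIso {W : Type*} {m : ℕ} (G : SimpleGraph W) (e : Fin (m + 1) → Sym2 W)
    {u v : W} (huv : e 0 = s(u, v)) :
    subdivideFamily (subdivide G u v) (fun t : Fin m => (e t.succ).map some) ≃g
      subdivideFamily G e where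
  toFun
    | inl none => inr 0
    | inl (some w) => inl w
    | inr t => inr t.succ
  invFun
    | inl w => inl (some w)
    | inr t => Fin.cases (inl none) inr t
  left_inv := by rintro ((_ | w) | t) <;> rfl
  right_inv := by
    rintro (w | t)
    · rfl
    · cases t using Fin.cases <;> rfl
  map_rel_iff' := by
    have none_notMem_range : none ∉ Set.range (some : W → Option W) := by simp
    rintro ((_ | x) | t) ((_ | y) | t') <;>
      simp [Fin.exists_fin_succ, huv, Sym2.mem_map,
        Sym2.map_eq_mk_iff_of_injective (Option.some_injective W),
        Sym2.map_ne_mk_of_notMem_range none_notMem_range]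
    tauto

lemma exists_subdivSteps_iso_subdivideFamily : ∀ {m : ℕ} {W : Type} (G : SimpleGraph W)
    (e : Fin m → Sym2 W), (∀ t, e t ∈ G.edgeSet) → e.Injective →
    ∃ q : GraphB, SubdivSteps m ⟨W, G⟩ q ∧ Nonempty (q.2 ≃g subdivideFamily G e)
  | 0, W, G, e, _, _ => ⟨⟨W, G⟩, rfl, ⟨(subdivideFamilyIsEmptyIso G e).symm⟩⟩
  | m + 1, W, G, e, hedge, he => by
    obtain ⟨u, v, huv⟩ : ∃ u v, e 0 = s(u, v) := ⟨_, _, (Quot.out_eq (e 0)).symm⟩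
    have hedge' (t : Fin m) : (e t.succ).map some ∈ (subdivide G u v).edgeSet := by
      have := hedge t.succ
      induction h : e t.succ using Sym2.ind with
      | h x y =>
        rw [h] at this
        exact (subdivide_adj_some_some G u v).2
          ⟨this, fun h' => t.succ_ne_zero (he (by rw [h, h', huv]))⟩
    have he' : Function.Injective fun t : Fin m => (e t.succ).map some :=
      (Sym2.map.injective (Option.some_injective W)).comp (he.comp (Fin.succ_injective m))
    obtain ⟨q, hq, ⟨iso⟩⟩ := exists_subdivSteps_iso_subdivideFamily _ _ hedge' he'
    have hstep : SubdivStep ⟨W, G⟩ ⟨Option W, subdivide G u v⟩ :=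
      ⟨u, v, by simpa [huv] using hedge 0, ⟨Iso.refl⟩⟩
    exact ⟨q, ⟨_, hstep, hq⟩, ⟨iso.trans (subdivideFamilySuccIso G e huv)⟩⟩

def SimpleGraph.Embedding.deleteEdgesComap {V W : Type*} {A : SimpleGraph V} {B : SimpleGraph W}
    (φ : A ↪g B) (T : Set (Sym2 W)) : A.deleteEdges (Sym2.map φ ⁻¹' T) ↪g B.deleteEdges T where
  toEmbedding := φ.toEmbedding
  map_rel_iff' := by simp

def deleteEdgeEmbeddingSubdivide {W : Type*} (G : SimpleGraph W) (u v : W) :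
    G.deleteEdges {s(u, v)} ↪g subdivide G u v where
  toEmbedding := ⟨some, Option.some_injective W⟩
  map_rel_iff' := by simp

lemma exists_deleteEdges_embedding_of_subdivSteps : ∀ {n : ℕ} {p q : GraphB},
    SubdivSteps n p q →
      ∃ T ⊆ p.2.edgeSet, T.encard ≤ n ∧ Nonempty (p.2.deleteEdges T ↪g q.2)
  | 0, p, q, h => ⟨∅, Set.empty_subset _, by simp, ⟨by rw [deleteEdges_empty, ← h]⟩⟩
  | n + 1, p, q, ⟨p₁, ⟨u, v, huv, ⟨j⟩⟩, h⟩ => by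
    obtain ⟨T₁, hT₁, hcard, ⟨ψ⟩⟩ := exists_deleteEdges_embedding_of_subdivSteps h
    let φ := j.symm.toEmbedding.comp (deleteEdgeEmbeddingSubdivide p.2 u v)
    refine ⟨insert s(u, v) (Sym2.map φ ⁻¹' T₁), ?_, ?_, ?_⟩
    · rintro e (rfl | he)
      · exact huv
      · have := φ.map_mem_edgeSet_iff.1 (hT₁ he)
        rw [edgeSet_deleteEdges] at this
        exact this.1
    · calc (insert s(u, v) (Sym2.map φ ⁻¹' T₁)).encard
          ≤ (Sym2.map φ ⁻¹' T₁).encard + 1 := Set.encard_insert_le _ _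
        _ ≤ T₁.encard + 1 := by
          gcongr
          exact Set.encard_le_encard_of_injOn (fun e he => he)
            (Sym2.map.injective φ.injective).injOn
        _ ≤ n + 1 := by gcongr
    · rw [Set.insert_eq, ← deleteEdges_deleteEdges]
      exact ⟨ψ.comp (φ.deleteEdgesComap T₁)⟩

section Embeddings

variable {V W U : Type*} {G : SimpleGraph V} {K : SimpleGraph W} {A : SimpleGraph U}

lemma ndeg_le_ndeg_of_embedding [Finite W] (φ : G ↪g K) (x : V) : ndeg G x ≤ ndeg K (φ x) :=
  Set.ncard_le_ncard_of_injOn φ (fun _ hy => φ.map_adj_iff.2 hy) φ.injective.injOn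
    (Set.toFinite _)

lemma nonempty_induce_embedding_of_forall_mem_range (φ : G ↪g K) (ψ : A ↪g K) (s : Set V)
    (h : ∀ x ∈ s, φ x ∈ Set.range ψ) : Nonempty (G.induce s ↪g A) := by
  choose g hg using fun x : s => h x x.2
  refine ⟨⟨⟨g, fun x y hxy => Subtype.ext (φ.injective ?_)⟩, fun {x y} => ?_⟩⟩
  · rw [← hg x, ← hg y, hxy]
  · change A.Adj (g x) (g y) ↔ G.Adj x y
    rw [← ψ.map_adj_iff, hg, hg, φ.map_adj_iff]

end Embeddings

section RoofStructure

variable {α : Type*}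

def AtMostOneHighEdge (H : SimpleGraph α) : Prop :=
  ∀ x y x' y' : α, 3 ≤ ndeg H x → 3 ≤ ndeg H y → 3 ≤ ndeg H x' → 3 ≤ ndeg H y' →
    H.Adj x y → H.Adj x' y' → s(x, y) = s(x', y')

def IsAttachmentPair (H : SimpleGraph α) (a b : α) : Prop :=
  ∃ z : α, IsRoofTriangle H a b z ∧ 3 ≤ ndeg H a ∧ 3 ≤ ndeg H b

lemma IsTriangle.adj_of_mem {H : SimpleGraph α} {x y z p q : α} (h : IsTriangle H x y z)
    (hp : p ∈ ({x, y, z} : Set α)) (hq : q ∈ ({x, y, z} : Set α)) (hpq : p ≠ q) : H.Adj p q := by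
  obtain ⟨hxy, hyz, hxz⟩ := h
  simp only [Set.mem_insert_iff, Set.mem_singleton_iff] at hp hq
  rcases hp with rfl | rfl | rfl <;> rcases hq with rfl | rfl | rfl <;>
    first | exact absurd rfl hpq | assumption | exact SimpleGraph.Adj.symm ‹_›

variable {H : SimpleGraph α} {a b : α}

namespace IsAttachmentPair

variable (hr : IsAttachmentPair H a b)
include hr

lemma adj : H.Adj a b := hr.choose_spec.1.1.1

lemma ne : a ≠ b := hr.adj.ne

lemma left_high : 3 ≤ ndeg H a := hr.choose_spec.2.1

lemma right_high : 3 ≤ ndeg H b := hr.choose_spec.2.2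

lemma left_mem : a ∈ roofVerts H := ⟨b, _, hr.choose_spec.1⟩

lemma right_mem : b ∈ roofVerts H := by
  obtain ⟨z, ⟨⟨hab, hbz, haz⟩, hcard⟩, -⟩ := hr
  exact ⟨a, z, ⟨hab.symm, haz, hbz⟩, by rwa [Set.insert_comm]⟩

end IsAttachmentPair

variable (hone : AtMostOneHighEdge H) (hr : IsAttachmentPair H a b)
include hone hr

lemma IsRoofTriangle.inter_high_eq {x y z : α} (h : IsRoofTriangle H x y z) :
    ({x, y, z} : Set α) ∩ {w | 3 ≤ ndeg H w} = {a, b} := by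
  obtain ⟨p, q, hpq, hS⟩ := Set.ncard_eq_two.1 h.2
  have hp : p ∈ ({x, y, z} : Set α) ∩ {w | 3 ≤ ndeg H w} := hS ▸ Set.mem_insert _ _
  have hq : q ∈ ({x, y, z} : Set α) ∩ {w | 3 ≤ ndeg H w} := hS ▸ Set.mem_insert_of_mem _ rfl
  have := hone p q a b hp.2 hq.2 hr.left_high hr.right_high (h.1.adj_of_mem hp.1 hq.1 hpq) hr.adj
  rcases Sym2.eq_iff.1 this with ⟨rfl, rfl⟩ | ⟨rfl, rfl⟩
  · exact hS
  · rw [hS, Set.pair_comm]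

lemma not_adj_of_high_of_notMem {r w : α} (hrX : r ∉ roofVerts H) (hr3 : 3 ≤ ndeg H r)
    (hw3 : 3 ≤ ndeg H w) : ¬ H.Adj r w := fun hrw => by
  rcases Sym2.eq_iff.1 (hone r w a b hr3 hw3 hr.left_high hr.right_high hrw hr.adj) with
    ⟨rfl, -⟩ | ⟨rfl, -⟩
  exacts [hrX hr.left_mem, hrX hr.right_mem]

lemma not_adj_and_adj_of_notMem {r : α} (hrX : r ∉ roofVerts H) : ¬ (H.Adj r a ∧ H.Adj r b) := by
  rintro ⟨hra, hrb⟩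
  by_cases hr3 : 3 ≤ ndeg H r
  · exact not_adj_of_high_of_notMem hone hr hrX hr3 hr.left_high hra
  · refine hrX ⟨a, b, ⟨hra, hr.adj, hrb⟩, ?_⟩
    have : ({r, a, b} : Set α) ∩ {w | 3 ≤ ndeg H w} = {a, b} := by
      ext w
      constructor
      · rintro ⟨rfl | rfl | rfl, hw⟩
        exacts [absurd hw hr3, Or.inl rfl, Or.inr rfl]
      · rintro (rfl | rfl)
        exacts [⟨by simp, hr.left_high⟩, ⟨by simp, hr.right_high⟩]
    rw [this, Set.ncard_pair hr.ne]

lemma adj_and_adj_of_mem_roofVerts {z : α} (hz : z ∈ roofVerts H) (hza : z ≠ a) (hzb : z ≠ b) :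
    H.Adj z a ∧ H.Adj z b ∧ ndeg H z < 3 := by
  obtain ⟨y, w, h⟩ := hz
  have hS := h.inter_high_eq hone hr
  have ha : a ∈ ({z, y, w} : Set α) ∩ {w | 3 ≤ ndeg H w} := hS ▸ Set.mem_insert _ _
  have hb : b ∈ ({z, y, w} : Set α) ∩ {w | 3 ≤ ndeg H w} := hS ▸ Set.mem_insert_of_mem _ rfl
  have hz : z ∉ ({z, y, w} : Set α) ∩ {w | 3 ≤ ndeg H w} := by
    rw [hS]; simp [hza, hzb]
  refine ⟨h.1.adj_of_mem (by simp) ha.1 hza, h.1.adj_of_mem (by simp) hb.1 hzb, ?_⟩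
  simpa using hz

end RoofStructure

section BookGraph

variable {α : Type*} {H : SimpleGraph α} {a b : α}
  (hone : AtMostOneHighEdge H) (hr : IsAttachmentPair H a b)
include hone hr

lemma eq_or_eq_of_adj_of_mem_roofVerts [Finite α] {z w : α} (hz : z ∈ roofVerts H) (hza : z ≠ a)
    (hzb : z ≠ b) (hzw : H.Adj z w) : w = a ∨ w = b := by
  obtain ⟨hza', hzb', hlow⟩ := adj_and_adj_of_mem_roofVerts hone hr hz hza hzb
  have hsub : ({a, b} : Set α) ⊆ H.neighborSet z := by
    rintro x (rfl | rfl) <;> assumption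
  have heq := Set.eq_of_subset_of_ncard_le hsub
    (by rw [Set.ncard_pair hr.ne]; exact Nat.le_of_lt_succ hlow) (Set.toFinite _)
  have hw : w ∈ H.neighborSet z := hzw
  rwa [← heq] at hw

lemma eq_or_eq_of_adj_of_notMem [Finite α] {x y : α} (hx : x ∈ roofVerts H) (hy : y ∉ roofVerts H)
    (hxy : H.Adj x y) : x = a ∨ x = b := by
  by_contra! h
  rcases eq_or_eq_of_adj_of_mem_roofVerts hone hr hx h.1 h.2 hxy with rfl | rfl
  exacts [hy hr.left_mem, hy hr.right_mem]

lemma adj_of_mem_roofVerts {x y : α} (hx : x = a ∨ x = b) (hy : y ∈ roofVerts H) (hxy : x ≠ y) :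
    H.Adj x y := by
  rcases hx with rfl | rfl
  · by_cases hyb : y = b
    · exact hyb ▸ hr.adj
    · exact (adj_and_adj_of_mem_roofVerts hone hr hy hxy.symm hyb).1.symm
  · by_cases hya : y = a
    · exact hya ▸ hr.adj.symm
    · exact (adj_and_adj_of_mem_roofVerts hone hr hy hya hxy.symm).2.1.symm

lemma adj_iff_of_mem_roofVerts [Finite α] {x y : α} (hx : x ∈ roofVerts H)
    (hy : y ∈ roofVerts H) : H.Adj x y ↔ x ≠ y ∧ (x = a ∨ x = b ∨ y = a ∨ y = b) := by
  constructor
  · intro hxy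
    refine ⟨hxy.ne, ?_⟩
    by_cases hab : x = a ∨ x = b
    · tauto
    · push Not at hab
      have := eq_or_eq_of_adj_of_mem_roofVerts hone hr hx hab.1 hab.2 hxy
      tauto
  · rintro ⟨hxy, (h | h) | (h | h)⟩
    all_goals first
      | exact adj_of_mem_roofVerts hone hr (by tauto) hy hxy
      | exact (adj_of_mem_roofVerts hone hr (by tauto) hx hxy.symm).symm

omit hone in
lemma swap_mem_roofVerts_iff [DecidableEq α] {x : α} :
    Equiv.swap a b x ∈ roofVerts H ↔ x ∈ roofVerts H := by
  rcases eq_or_ne x a with rfl | hxa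
  · simp [hr.left_mem, hr.right_mem]
  rcases eq_or_ne x b with rfl | hxb
  · simp [hr.left_mem, hr.right_mem]
  · rw [Equiv.swap_apply_of_ne_of_ne hxa hxb]

def roofVertsSwap [Finite α] [DecidableEq α] :
    H.induce (roofVerts H) ≃g H.induce (roofVerts H) where
  toEquiv := (Equiv.swap a b).subtypeEquiv fun _ => (swap_mem_roofVerts_iff hr).symm
  map_rel_iff' {x y} := by
    simp only [comap_adj, Function.Embedding.coe_subtype, Equiv.subtypeEquiv_apply]
    rw [adj_iff_of_mem_roofVerts hone hr x.2 y.2, adj_iff_of_mem_roofVerts hone hr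
      ((swap_mem_roofVerts_iff hr).2 x.2) ((swap_mem_roofVerts_iff hr).2 y.2)]
    simp only [ne_eq, (Equiv.swap a b).injective.eq_iff, Equiv.swap_apply_eq_iff,
      Equiv.swap_apply_left, Equiv.swap_apply_right]
    tauto

end BookGraph

section AttachRoof

variable {α V₀ : Type} (H : SimpleGraph α) (a b : α) (G₀ : SimpleGraph V₀) (D : Set (V₀ × V₀))
  (k : ℕ)

@[simp]
lemma attachRoof_adj_inl_inl {u v : V₀} :
    (attachRoof H a b G₀ D k).Adj (inl u) (inl v) ↔ G₀.Adj u v := by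
  simp only [attachRoof, fromRel_adj]
  have := G₀.adj_comm u v
  aesop

@[simp]
lemma attachRoof_adj_inr_inr {d d' : D} {i i' : Fin (k + 1)} {r r' : ↥(roofVerts H)ᶜ} :
    (attachRoof H a b G₀ D k).Adj (inr (d, i, r)) (inr (d', i', r')) ↔
      d = d' ∧ i = i' ∧ H.Adj r r' := by
  simp only [attachRoof, fromRel_adj]
  have := H.adj_comm r r'
  aesop

@[simp]
lemma attachRoof_adj_inr_inl {d : D} {i : Fin (k + 1)} {r : ↥(roofVerts H)ᶜ} {w : V₀} :
    (attachRoof H a b G₀ D k).Adj (inr (d, i, r)) (inl w) ↔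
      (w = d.1.1 ∧ H.Adj r a) ∨ (w = d.1.2 ∧ H.Adj r b) := by
  simp only [attachRoof, fromRel_adj]
  aesop

@[simp]
lemma attachRoof_adj_inl_inr {d : D} {i : Fin (k + 1)} {r : ↥(roofVerts H)ᶜ} {w : V₀} :
    (attachRoof H a b G₀ D k).Adj (inl w) (inr (d, i, r)) ↔
      (w = d.1.1 ∧ H.Adj r a) ∨ (w = d.1.2 ∧ H.Adj r b) := by
  rw [adj_comm, attachRoof_adj_inr_inl]

lemma map_inl_mem_edgeSet_attachRoof_iff {e : Sym2 V₀} :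
    e.map inl ∈ (attachRoof H a b G₀ D k).edgeSet ↔ e ∈ G₀.edgeSet :=
  Sym2.ind (fun _ _ => attachRoof_adj_inl_inl H a b G₀ D k) e

variable {H a b G₀ D k}

lemma ndeg_attachRoof_inr_le [Finite α] (hab : a ≠ b) (ha : a ∈ roofVerts H)
    (hb : b ∈ roofVerts H) {d : D} (hd : d.1.1 ≠ d.1.2) (i : Fin (k + 1)) (r : ↥(roofVerts H)ᶜ) :
    ndeg (attachRoof H a b G₀ D k) (inr (d, i, r)) ≤ ndeg H r := by
  classical
  let f : V₀ ⊕ (D × Fin (k + 1) × ↥(roofVerts H)ᶜ) → α :=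
    Sum.elim (fun w => if w = d.1.1 then a else b) (fun g => g.2.2)
  have hf_mem (w : V₀) : f (inl w) ∈ roofVerts H := by
    simp only [f, Sum.elim_inl]; split <;> assumption
  refine Set.ncard_le_ncard_of_injOn f ?_ ?_ (Set.toFinite _)
  · rintro (w | ⟨d', i', r'⟩) hw
    · simp only [mem_neighborSet, attachRoof_adj_inr_inl] at hw
      rcases hw with ⟨rfl, h⟩ | ⟨rfl, h⟩
      · simpa [f] using h
      · simpa [f, hd.symm] using h
    · simp only [mem_neighborSet, attachRoof_adj_inr_inr] at hw
      exact hw.2.2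
  · rintro (w₁ | ⟨d₁, i₁, r₁⟩) hw₁ (w₂ | ⟨d₂, i₂, r₂⟩) hw₂ heq
    · simp only [mem_neighborSet, attachRoof_adj_inr_inl] at hw₁ hw₂
      rcases hw₁ with ⟨rfl, -⟩ | ⟨rfl, -⟩ <;> rcases hw₂ with ⟨rfl, -⟩ | ⟨rfl, -⟩ <;>
        simp_all [f, hd.symm, hab.symm]
    · exact (r₂.2 (by simpa [heq, f] using hf_mem w₁)).elim
    · exact (r₁.2 (by simpa [← heq, f] using hf_mem w₂)).elim
    · simp only [mem_neighborSet, attachRoof_adj_inr_inr] at hw₁ hw₂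
      obtain ⟨rfl, rfl, -⟩ := hw₁
      obtain ⟨rfl, rfl, -⟩ := hw₂
      rw [Subtype.ext (a1 := r₁) heq]

end AttachRoof

section Forward

variable {α V₀ ι : Type} {H : SimpleGraph α} {a b : α}
  {G₀ : SimpleGraph V₀} {D : Set (V₀ × V₀)} {k : ℕ} {f : ι → Sym2 V₀}
  (hone : AtMostOneHighEdge H) (hr : IsAttachmentPair H a b) (hD : ∀ p ∈ D, p.1 ≠ p.2)
  (φ : H ↪g subdivideFamily (attachRoof H a b G₀ D k) (Sym2.map inl ∘ f))

def attachRoofBaseEmbedding : G₀.deleteEdges (Set.range f) ↪g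
    subdivideFamily (attachRoof H a b G₀ D k) (Sym2.map inl ∘ f) where
  toFun u := inl (inl u)
  inj' _ _ h := inl_injective (inl_injective h)
  map_rel_iff' {u v} := by
    change (subdivideFamily _ _).Adj (inl (inl u)) (inl (inl v)) ↔ _
    simp [Sym2.map_eq_mk_iff_of_injective inl_injective]

lemma subdivideFamily_attachRoof_adj_inr_iff {g : D × Fin (k + 1) × ↥(roofVerts H)ᶜ}
    {y : V₀ ⊕ (D × Fin (k + 1) × ↥(roofVerts H)ᶜ)} :
    (subdivideFamily (attachRoof H a b G₀ D k) (Sym2.map inl ∘ f)).Adj (inl (inr g)) (inl y) ↔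
      (attachRoof H a b G₀ D k).Adj (inr g) y := by
  have : inr g ∉ Set.range (inl : V₀ → V₀ ⊕ (D × Fin (k + 1) × ↥(roofVerts H)ᶜ)) := by simp
  simp [Sym2.map_ne_mk_of_notMem_range this]

include hone hr in
lemma eq_inl_of_mem_roofVerts {ua ub : V₀} (hua : φ a = inl (inl ua)) (hub : φ b = inl (inl ub))
    {x : α} (hx : x ∈ roofVerts H) : ∃ u, φ x = inl (inl u) := by
  by_cases hxa : x = a
  · exact ⟨ua, hxa ▸ hua⟩
  by_cases hxb : x = b
  · exact ⟨ub, hxb ▸ hub⟩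
  obtain ⟨hxa', hxb', -⟩ := adj_and_adj_of_mem_roofVerts hone hr hx hxa hxb
  have hab := φ.map_adj_iff.2 hr.adj
  have ha := φ.map_adj_iff.2 hxa'
  have hb := φ.map_adj_iff.2 hxb'
  rw [hua, hub] at hab
  rw [hua] at ha
  rw [hub] at hb
  have hab' := (attachRoofBaseEmbedding (H := H) (D := D) (k := k)).map_adj_iff.1 hab
  rcases hφ : φ x with (u | ⟨d, i, r⟩) | t
  · exact ⟨u, rfl⟩
  · rw [hφ, subdivideFamily_attachRoof_adj_inr_iff, attachRoof_adj_inr_inl] at ha hb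
    exfalso
    rcases ha with ⟨rfl, ha⟩ | ⟨rfl, ha⟩ <;> rcases hb with ⟨h, hb⟩ | ⟨h, hb⟩
    · exact hab'.ne h.symm
    · exact not_adj_and_adj_of_notMem hone hr r.2 ⟨ha, hb⟩
    · exact not_adj_and_adj_of_notMem hone hr r.2 ⟨hb, ha⟩
    · exact hab'.ne h.symm
  · rw [hφ] at ha hb
    simp only [subdivideFamily_adj_inr_inl, Function.comp_apply, Sym2.inl_mem_map_inl_iff] at ha hb
    exfalso
    exact (deleteEdges_adj.1 hab').2 ⟨t, (Sym2.mem_and_mem_iff hab'.ne).1 ⟨ha, hb⟩⟩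

variable [Finite α] [Finite V₀] [Finite ι]

include hr hD in
lemma eq_inl_or_high_of_high {x : α} (hx : 3 ≤ ndeg H x) :
    (∃ u, φ x = inl (inl u)) ∨ ∃ d i r, φ x = inl (inr (d, i, r)) ∧ 3 ≤ ndeg H r := by
  have hdeg := ndeg_le_ndeg_of_embedding φ x
  rcases hφ : φ x with (u | ⟨d, i, r⟩) | t
  · exact Or.inl ⟨u, rfl⟩
  · rw [hφ, ndeg_subdivideFamily_inl _ _ (by simp)] at hdeg
    exact Or.inr ⟨d, i, r, rfl, hx.trans (hdeg.trans
      (ndeg_attachRoof_inr_le hr.ne hr.left_mem hr.right_mem (hD d d.2) i r))⟩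
  · rw [hφ] at hdeg
    have := ndeg_subdivideFamily_inr_le_two (attachRoof H a b G₀ D k) (Sym2.map inl ∘ f) t
    omega

include hone hr hD in
lemma eq_inl_of_high_of_adj {x y : α} (hx : 3 ≤ ndeg H x) (hy : 3 ≤ ndeg H y)
    (hxy : H.Adj x y) : ∃ u, φ x = inl (inl u) := by
  refine (eq_inl_or_high_of_high hr hD φ hx).resolve_right ?_
  rintro ⟨d, i, r, hφx, hr3⟩
  have hadj := φ.map_adj_iff.2 hxy
  rw [hφx] at hadj
  rcases eq_inl_or_high_of_high hr hD φ hy with ⟨w, hφy⟩ | ⟨d', i', r', hφy, hr3'⟩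
  · rw [hφy, subdivideFamily_attachRoof_adj_inr_iff, attachRoof_adj_inr_inl] at hadj
    rcases hadj with ⟨-, h⟩ | ⟨-, h⟩
    exacts [not_adj_of_high_of_notMem hone hr r.2 hr3 hr.left_high h,
      not_adj_of_high_of_notMem hone hr r.2 hr3 hr.right_high h]
  · rw [hφy, subdivideFamily_attachRoof_adj_inr_iff, attachRoof_adj_inr_inr] at hadj
    exact not_adj_of_high_of_notMem hone hr r.2 hr3 hr3' hadj.2.2

include hone hr hD in
lemma hFree_subdivideFamily_attachRoof
    (hfree : HFree (H.induce (roofVerts H)) (G₀.deleteEdges (Set.range f))) :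
    HFree H (subdivideFamily (attachRoof H a b G₀ D k) (Sym2.map inl ∘ f)) := by
  refine ⟨fun φ => ?_⟩
  obtain ⟨ua, hua⟩ := eq_inl_of_high_of_adj hone hr hD φ hr.left_high hr.right_high hr.adj
  obtain ⟨ub, hub⟩ := eq_inl_of_high_of_adj hone hr hD φ hr.right_high hr.left_high hr.adj.symm
  obtain ⟨ψ⟩ := nonempty_induce_embedding_of_forall_mem_range φ attachRoofBaseEmbedding
    (roofVerts H) fun x hx => by
      obtain ⟨u, hu⟩ := eq_inl_of_mem_roofVerts hone hr φ hua hub hx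
      exact ⟨u, hu.symm⟩
  exact hfree.false ψ

end Forward

section Backward

variable {α V₀ : Type} {H : SimpleGraph α} {a b : α} {G₀ : SimpleGraph V₀} {D : Set (V₀ × V₀)}
  {k : ℕ}

lemma attachRoof_copy_eq_of_mem_edgeSet {e : Sym2 (V₀ ⊕ (D × Fin (k + 1) × ↥(roofVerts H)ᶜ))}
    (he : e ∈ (attachRoof H a b G₀ D k).edgeSet) {d d' : D} {i i' : Fin (k + 1)}
    {r r' : ↥(roofVerts H)ᶜ} (h : inr (d, i, r) ∈ e) (h' : inr (d', i', r') ∈ e) : i = i' := by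
  induction e using Sym2.ind with
  | h x y =>
    rw [mem_edgeSet] at he
    rcases Sym2.mem_iff.1 h with rfl | rfl <;> rcases Sym2.mem_iff.1 h' with h' | h' <;>
      subst_vars <;> simp_all

lemma exists_copy_forall_notMem {T : Set (Sym2 (V₀ ⊕ (D × Fin (k + 1) × ↥(roofVerts H)ᶜ)))}
    (hT : T ⊆ (attachRoof H a b G₀ D k).edgeSet) (hcard : T.encard ≤ k) (d : D) :
    ∃ i : Fin (k + 1), ∀ e ∈ T, ∀ r, inr (d, i, r) ∉ e := by
  by_contra! h
  choose g hgT r hr using h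
  have hinj : g.Injective := fun i i' hii' =>
    attachRoof_copy_eq_of_mem_edgeSet (hT (hgT i')) (hii' ▸ hr i) (hr i')
  have := Set.encard_le_encard_of_injOn (s := Set.univ) (fun i _ => hgT i) hinj.injOn
  simp at this
  exact absurd (this.trans hcard) (by exact_mod_cast (k.lt_succ_self).not_ge)

lemma nonempty_embedding_deleteEdges_attachRoof [Finite α] (hone : AtMostOneHighEdge H)
    (hr : IsAttachmentPair H a b) {T : Set (Sym2 (V₀ ⊕ (D × Fin (k + 1) × ↥(roofVerts H)ᶜ)))}
    {d : D} {i : Fin (k + 1)} (hi : ∀ e ∈ T, ∀ r, inr (d, i, r) ∉ e)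
    (e : H.induce (roofVerts H) ↪g G₀.deleteEdges (Sym2.map inl ⁻¹' T))
    (hea : e ⟨a, hr.left_mem⟩ = d.1.1) (heb : e ⟨b, hr.right_mem⟩ = d.1.2) :
    Nonempty (H ↪g (attachRoof H a b G₀ D k).deleteEdges T) := by
  classical
  have hXX (x y : roofVerts H) :
      ((attachRoof H a b G₀ D k).deleteEdges T).Adj (inl (e x)) (inl (e y)) ↔ H.Adj x y := by
    refine Iff.trans ?_ (e.map_adj_iff (v := x) (w := y))
    simp
  have hXO (x : roofVerts H) (y : ↥(roofVerts H)ᶜ) :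
      ((attachRoof H a b G₀ D k).deleteEdges T).Adj (inl (e x)) (inr (d, i, y)) ↔ H.Adj x y := by
    have hT : s(inl (e x), inr (d, i, y)) ∉ T := fun h => hi _ h y (Sym2.mem_mk_right _ _)
    rw [deleteEdges_adj, and_iff_left hT, attachRoof_adj_inl_inr, ← hea, ← heb,
      e.injective.eq_iff, e.injective.eq_iff, Subtype.ext_iff, Subtype.ext_iff]
    constructor
    · rintro (⟨hxa, h⟩ | ⟨hxb, h⟩)
      exacts [hxa ▸ h.symm, hxb ▸ h.symm]
    · intro h
      rcases eq_or_eq_of_adj_of_notMem hone hr x.2 y.2 h with hxa | hxb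
      exacts [Or.inl ⟨hxa, hxa ▸ h.symm⟩, Or.inr ⟨hxb, hxb ▸ h.symm⟩]
  have hOO (x y : ↥(roofVerts H)ᶜ) :
      ((attachRoof H a b G₀ D k).deleteEdges T).Adj (inr (d, i, x)) (inr (d, i, y)) ↔
        H.Adj x y := by
    have hT : s(inr (d, i, x), inr (d, i, y)) ∉ T := fun h => hi _ h x (Sym2.mem_mk_left _ _)
    simp [hT]
  let ρ : α → V₀ ⊕ (D × Fin (k + 1) × ↥(roofVerts H)ᶜ) := fun x =>
    if hx : x ∈ roofVerts H then inl (e ⟨x, hx⟩) else inr (d, i, ⟨x, hx⟩)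
  refine ⟨⟨⟨ρ, fun x y hxy => ?_⟩, fun {x y} => ?_⟩⟩
  · by_cases hx : x ∈ roofVerts H <;> by_cases hy : y ∈ roofVerts H <;>
      simp [ρ, hx, hy] at hxy <;> exact hxy
  · change ((attachRoof H a b G₀ D k).deleteEdges T).Adj (ρ x) (ρ y) ↔ H.Adj x y
    by_cases hx : x ∈ roofVerts H <;> by_cases hy : y ∈ roofVerts H <;> simp only [ρ, hx, hy,
      dite_true, dite_false]
    · exact hXX ⟨x, hx⟩ ⟨y, hy⟩
    · exact hXO ⟨x, hx⟩ ⟨y, hy⟩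
    · rw [adj_comm, hXO ⟨y, hy⟩ ⟨x, hx⟩, H.adj_comm]
    · exact hOO ⟨x, hx⟩ ⟨y, hy⟩

lemma nonempty_embedding_deleteEdges_of_induce [Finite α] (hone : AtMostOneHighEdge H)
    (hr : IsAttachmentPair H a b) (hD : ∀ u v, G₀.Adj u v → (u, v) ∈ D ∨ (v, u) ∈ D)
    {T : Set (Sym2 (V₀ ⊕ (D × Fin (k + 1) × ↥(roofVerts H)ᶜ)))}
    (hT : T ⊆ (attachRoof H a b G₀ D k).edgeSet) (hcard : T.encard ≤ k)
    (e : H.induce (roofVerts H) ↪g G₀.deleteEdges (Sym2.map inl ⁻¹' T)) :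
    Nonempty (H ↪g (attachRoof H a b G₀ D k).deleteEdges T) := by
  classical
  have hab : (H.induce (roofVerts H)).Adj ⟨a, hr.left_mem⟩ ⟨b, hr.right_mem⟩ := hr.adj
  obtain ⟨d, e', hea, heb⟩ : ∃ (d : D) (e' : H.induce (roofVerts H) ↪g G₀.deleteEdges _),
      e' ⟨a, hr.left_mem⟩ = d.1.1 ∧ e' ⟨b, hr.right_mem⟩ = d.1.2 := by
    rcases hD _ _ (e.map_adj_iff.2 hab).1 with h | h
    · exact ⟨⟨_, h⟩, e, rfl, rfl⟩
    · refine ⟨⟨_, h⟩, e.comp (roofVertsSwap hone hr).toEmbedding, ?_, ?_⟩ <;>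
        simp [roofVertsSwap]
  obtain ⟨i, hi⟩ := exists_copy_forall_notMem hT hcard d
  exact nonempty_embedding_deleteEdges_attachRoof hone hr hi e' hea heb

end Backward

section Reduction

variable {α V₀ : Type} [Finite α] {H : SimpleGraph α} {a b : α} {G₀ : SimpleGraph V₀}
  {D : Set (V₀ × V₀)} {k : ℕ} (hone : AtMostOneHighEdge H) (hr : IsAttachmentPair H a b)
include hone hr

lemma exists_subdivSteps_hFree [Finite V₀] (hD : ∀ p ∈ D, p.1 ≠ p.2) {F : Finset (Sym2 V₀)}
    (hF : ↑F ⊆ G₀.edgeSet) (hfree : HFree (H.induce (roofVerts H)) (G₀.deleteEdges ↑F)) :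
    ∃ q : GraphB, SubdivSteps F.card ⟨_, attachRoof H a b G₀ D k⟩ q ∧ HFree H q.2 := by
  let f : Fin F.card → Sym2 V₀ := fun t => F.equivFin.symm t
  have hrange : Set.range f = F := by
    ext e
    exact ⟨fun ⟨t, ht⟩ => ht ▸ (F.equivFin.symm t).2, fun he => ⟨F.equivFin ⟨e, he⟩, by simp [f]⟩⟩
  obtain ⟨q, hq, ⟨iso⟩⟩ := exists_subdivSteps_iso_subdivideFamily (attachRoof H a b G₀ D k)
    (Sym2.map inl ∘ f)
    (fun t => (map_inl_mem_edgeSet_attachRoof_iff ..).2 (hF (F.equivFin.symm t).2))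
    ((Sym2.map.injective inl_injective).comp (Subtype.val_injective.comp F.equivFin.symm.injective))
  have := hFree_subdivideFamily_attachRoof (k := k) hone hr hD (hrange ▸ hfree)
  exact ⟨q, hq, ⟨fun φ => this.false (iso.toEmbedding.comp φ)⟩⟩

lemma exists_finset_hFree_deleteEdges (hD : ∀ u v, G₀.Adj u v → (u, v) ∈ D ∨ (v, u) ∈ D)
    {n : ℕ} (hn : n ≤ k) {q : GraphB} (hq : SubdivSteps n ⟨_, attachRoof H a b G₀ D k⟩ q)
    (hfree : HFree H q.2) :
    ∃ F : Finset (Sym2 V₀), ↑F ⊆ G₀.edgeSet ∧ F.card ≤ k ∧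
      HFree (H.induce (roofVerts H)) (G₀.deleteEdges ↑F) := by
  obtain ⟨T, hT, hcard, ⟨ψ⟩⟩ := exists_deleteEdges_embedding_of_subdivSteps hq
  replace hcard : T.encard ≤ k := hcard.trans (by exact_mod_cast hn)
  have hpre : (Sym2.map inl ⁻¹' T).encard ≤ k :=
    (Set.encard_le_encard_of_injOn (f := Sym2.map inl) (fun _ h => h)
      (Sym2.map.injective inl_injective).injOn).trans hcard
  have hfin := Set.finite_of_encard_le_coe hpre
  refine ⟨hfin.toFinset, fun e he => ?_, ?_, ⟨fun e => ?_⟩⟩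
  · rw [Set.Finite.coe_toFinset] at he
    exact (map_inl_mem_edgeSet_attachRoof_iff ..).1 (hT he)
  · rwa [← hfin.coe_toFinset, Set.encard_coe_eq_coe_finsetCard, Nat.cast_le] at hpre
  · rw [Set.Finite.coe_toFinset] at e
    obtain ⟨φ⟩ := nonempty_embedding_deleteEdges_of_induce hone hr hD hT hcard e
    exact hfree.false (ψ.comp φ)

end Reduction

theorem roof_triangle_reduction_general
    {α V₀ : Type} [Fintype α] [Fintype V₀]
    (H : SimpleGraph α) (a b : α)
    (honeEdge : ∀ x y x' y' : α, 3 ≤ ndeg H x → 3 ≤ ndeg H y → 3 ≤ ndeg H x' →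
      3 ≤ ndeg H y' → H.Adj x y → H.Adj x' y' → s(x, y) = s(x', y'))
    (hroof : ∃ z : α, IsRoofTriangle H a b z ∧ 3 ≤ ndeg H a ∧ 3 ≤ ndeg H b)
    (G₀ : SimpleGraph V₀) (k : ℕ)
    (D : Set (V₀ × V₀))
    (hD : ∀ u v : V₀, G₀.Adj u v ↔ ((u, v) ∈ D ∨ (v, u) ∈ D)) :
    (∃ F : Finset (Sym2 V₀), ↑F ⊆ G₀.edgeSet ∧ F.card ≤ k ∧
        HFree (H.induce (roofVerts H)) (G₀.deleteEdges ↑F)) ↔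
    (∃ n ≤ k, ∃ q : GraphB,
        SubdivSteps n ⟨V₀ ⊕ (↥D × Fin (k + 1) × ↥(roofVerts H)ᶜ), attachRoof H a b G₀ D k⟩ q ∧
        HFree H q.2) := by
  constructor
  · rintro ⟨F, hF, hFk, hfree⟩
    obtain ⟨q, hq, hqfree⟩ := exists_subdivSteps_hFree honeEdge hroof
      (fun p hp => ((hD p.1 p.2).2 (Or.inl hp)).ne) hF hfree
    exact ⟨F.card, hFk, q, hq, hqfree⟩
  · rintro ⟨n, hn, q, hq, hfree⟩
    exact exists_finset_hFree_deleteEdges honeEdge hroof (fun u v => (hD u v).1) hn hq hfree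

/-- The roof-triangle reduction: with `H'` the book graph induced by the roof triangles of
`H`, and `G` built from `G₀` as in `attachRoof`, `G₀` has a set of at most `k` edges whose
deletion makes it `H'`-free if and only if some graph obtained from `G` by at most `k` edge
subdivisions is `H`-free. -/
theorem roof_triangle_reduction
    {α V₀ : Type} [Fintype α] [Fintype V₀]
    (H : SimpleGraph α) (a b : α)
    (honeEdge : ∀ x y x' y' : α, 3 ≤ ndeg H x → 3 ≤ ndeg H y → 3 ≤ ndeg H x' →
      3 ≤ ndeg H y' → H.Adj x y → H.Adj x' y' → s(x, y) = s(x', y'))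
    (hroof : ∃ z : α, IsRoofTriangle H a b z ∧ 3 ≤ ndeg H a ∧ 3 ≤ ndeg H b)
    (G₀ : SimpleGraph V₀) (k : ℕ)
    (D : Set (V₀ × V₀))
    (hD : ∀ u v : V₀, G₀.Adj u v ↔ ((u, v) ∈ D ∨ (v, u) ∈ D))
    (hD' : ∀ u v : V₀, (u, v) ∈ D → (v, u) ∉ D) :
    (∃ F : Finset (Sym2 V₀), ↑F ⊆ G₀.edgeSet ∧ F.card ≤ k ∧
        HFree (H.induce (roofVerts H)) (G₀.deleteEdges ↑F)) ↔
    (∃ n ≤ k, ∃ q : GraphB,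
        SubdivSteps n ⟨V₀ ⊕ (↥D × Fin (k + 1) × ↥(roofVerts H)ᶜ), attachRoof H a b G₀ D k⟩ q ∧
        HFree H q.2) :=
  roof_triangle_reduction_general H a b honeEdge hroof G₀ k D hD
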